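/- arXiv:2511.06361 — 3 statements merged into one kernel-verified Lean document; each statement's English description precedes it below -/
import Mathlib

section
/- For a useful law L in a game (A, Δ, P), a law L' is a useful reduction of L if and only if L' is a vertex cover of the induced subgraph (L, S(P)^L), where S(P)^L = {L ∩ S(δ) : δ ∈ P}. -/
namespace MAS

variable {A α : Type*}

/-- The set of profiles of an action family `Δ`: functions assigning to each
agent `a` an action in `Δ a`. -/
def Profiles (Δ : A → Set α) : Set (A → α) := {δ | ∀ a, δ a ∈ Δ a}

/-- The support set `S(δ)` of a profile `δ`. -/
def supp (δ : A → α) : Set α := Set.range δ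

/-- A law in the game: a set of actions `L ⊆ ⋃ a, Δ a`. -/
def IsLaw (Δ : A → Set α) (L : Set α) : Prop := L ⊆ ⋃ a, Δ a

/-- The law-imposed action sets `Δ_a^L = Δ_a \ L`. -/
def lawActions (Δ : A → Set α) (L : Set α) : A → Set α := fun a => Δ a \ L

/-- The law-imposed prohibition `P^L = P ∩ ∏ Δ^L`. -/
def lawProhib (Δ : A → Set α) (P : Set (A → α)) (L : Set α) : Set (A → α) :=
  P ∩ Profiles (lawActions Δ L)

/-- A law `L` is useful if `P^L = ∅` in the law-imposed game. -/
def Useful (Δ : A → Set α) (P : Set (A → α)) (L : Set α) : Prop :=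
  lawProhib Δ P L = ∅

/-- An action `d` is a safe action of agent `a` in the game `(A, Δ, P)` if
`d ∈ Δ a` and `δ a ≠ d` for every prohibited profile `δ ∈ P`. -/
def SafeAction (Δ : A → Set α) (P : Set (A → α)) (a : A) (d : α) : Prop :=
  d ∈ Δ a ∧ ∀ δ ∈ P, δ a ≠ d

/-- In a prohibited profile `δ ∈ P`, agent `a` is responsible under law `L` if
`δ a ∈ L` (legally), or `S(δ) ∩ L = ∅` and a safe action of agent `a` exists in
the law-imposed game (counterfactually). -/
def Responsible (Δ : A → Set α) (P : Set (A → α)) (L : Set α) (δ : A → α) (a : A) : Prop :=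
  δ a ∈ L ∨ (supp δ ∩ L = ∅ ∧ ∃ d, SafeAction (lawActions Δ L) (lawProhib Δ P L) a d)

/-- A law `L` is gap-free if in each prohibited profile there is at least one
responsible agent. -/
def GapFree (Δ : A → Set α) (P : Set (A → α)) (L : Set α) : Prop :=
  ∀ δ ∈ P, ∃ a, Responsible Δ P L δ a

/-- An action `d` is safable if there is a law `L` and an agent `a` such that
`d` is a safe action of agent `a` in the law-imposed game. -/
def Safable (Δ : A → Set α) (P : Set (A → α)) (d : α) : Prop :=
  ∃ L, IsLaw Δ L ∧ ∃ a, SafeAction (lawActions Δ L) (lawProhib Δ P L) a d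

/-- `C` is a vertex cover of the hypergraph `(V, E)`. -/
def IsVC (V : Set α) (E : Set (Set α)) (C : Set α) : Prop :=
  C ⊆ V ∧ ∀ e ∈ E, (C ∩ e).Nonempty

/-- A minimal vertex cover. -/
def MinimalVC (V : Set α) (E : Set (Set α)) (C : Set α) : Prop :=
  IsVC V E C ∧ ∀ C', C' ⊂ C → ¬ IsVC V E C'

/-- A minimal gap-free law: a gap-free law no strict subset of which is gap-free. -/
def MinimalGapFree (Δ : A → Set α) (P : Set (A → α)) (L : Set α) : Prop :=
  GapFree Δ P L ∧ ∀ L', L' ⊂ L → ¬ GapFree Δ P L'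

/-- `S(P) = {S(δ) : δ ∈ P}`. -/
def suppSet (P : Set (A → α)) : Set (Set α) := (fun δ => supp δ) '' P

/-- The edge set `E^C = {C ∩ e : e ∈ E}` of the induced subgraph. -/
def inducedEdges (E : Set (Set α)) (C : Set α) : Set (Set α) := (fun e => C ∩ e) '' E

/-- The vertex set `(⋃ Δ) \ {d}` of the hypergraph `H^{a,d}`. -/
def Hvertices (Δ : A → Set α) (d : α) : Set α := (⋃ a, Δ a) \ {d}

/-- The edge set `{S(δ) \ {d} : δ ∈ P, δ a = d}` of the hypergraph `H^{a,d}`. -/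
def Hedges (P : Set (A → α)) (a : A) (d : α) : Set (Set α) :=
  (fun δ => supp δ \ {d}) '' {δ ∈ P | δ a = d}

/-! A profile of `P` survives the law `M` exactly when it avoids `M`, so `M` is useful iff it
meets every support `S(δ)`, `δ ∈ P`; and for `M ⊆ L`, meeting `S(δ)` is the same as meeting
`L ∩ S(δ)`. -/

theorem inter_supp_nonempty_iff (M : Set α) (δ : A → α) :
    (M ∩ supp δ).Nonempty ↔ ∃ a, δ a ∈ M := by
  simp only [supp, Set.Nonempty, Set.mem_inter_iff, Set.mem_range]
  exact ⟨fun ⟨_, hx, a, ha⟩ => ⟨a, ha ▸ hx⟩, fun ⟨a, ha⟩ => ⟨δ a, ha, a, rfl⟩⟩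

theorem useful_iff_forall_exists_mem {Δ : A → Set α} {P : Set (A → α)}
    (hP : P ⊆ Profiles Δ) (M : Set α) :
    Useful Δ P M ↔ ∀ δ ∈ P, ∃ a, δ a ∈ M := by
  simp only [Useful, lawProhib, Set.eq_empty_iff_forall_notMem, Set.mem_inter_iff, Profiles,
    lawActions, Set.mem_ofPred_eq, Set.mem_sdiff, not_and]
  refine forall₂_congr fun δ hδ => ?_
  simp only [hP hδ _, true_and, not_forall, not_not]

theorem isVC_inducedEdges_iff (V C : Set α) (E : Set (Set α)) :
    IsVC V (inducedEdges E V) C ↔ C ⊆ V ∧ ∀ e ∈ E, (C ∩ e).Nonempty := by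
  simp only [IsVC, inducedEdges, Set.forall_mem_image]
  refine and_congr_right fun hCV => forall₂_congr fun e _ => ?_
  rw [← Set.inter_assoc, Set.inter_eq_left.mpr hCV]

theorem usefulReduction_iff_isVC_general {A α : Type*}
    (Δ : A → Set α) (P : Set (A → α))
    (hP : P ⊆ Profiles Δ)
    (L : Set α)
    (L' : Set α) :
    (Useful Δ P L' ∧ L' ⊆ L) ↔ IsVC L (inducedEdges (suppSet P) L) L' := by
  simp only [isVC_inducedEdges_iff, suppSet, Set.forall_mem_image, inter_supp_nonempty_iff,
    useful_iff_forall_exists_mem hP, and_comm]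

/-- For a useful law `L` in a game `(A, Δ, P)`, a law `L'` is a
useful reduction of `L` if and only if `L'` is a vertex cover of the induced
subgraph `(L, S(P)^L)`, where `S(P)^L = {L ∩ S(δ) : δ ∈ P}`. -/
theorem usefulReduction_iff_isVC {A α : Type*} [Fintype A] [Nonempty A]
    (Δ : A → Set α) (P : Set (A → α))
    (hΔfin : ∀ a, (Δ a).Finite) (hP : P ⊆ Profiles Δ)
    (L : Set α) (hL : IsLaw Δ L) (hLuseful : Useful Δ P L)
    (L' : Set α) (hL' : IsLaw Δ L') :
    (Useful Δ P L' ∧ L' ⊆ L) ↔ IsVC L (inducedEdges (suppSet P) L) L' :=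
  usefulReduction_iff_isVC_general Δ P hP L L'

end MAS
end

section
/- Let (A, Δ, P) be a game, γ ∉ A a fresh agent, and p, n two distinct fresh actions not in ⋃Δ, and let (Ā, Δ̄, P̄) be the game constructed from these data. For a useful law L in the game (A, Δ, P), a set L' is a useful reduction of L in the game (A, Δ, P) if and only if L' is a gap-free reduction of L in the game (Ā, Δ̄, P̄). -/
namespace MAS

variable {A α : Type*}

variable {A α : Type*}

/-- The action sets of the game `(Ā, Δ̄, P̄)`: the fresh agent `γ` is modelled as
`none : Option A`, with `Δ̄_γ = {p, n}` and `Δ̄_a = Δ_a ∪ {n}` for `a ∈ A`. -/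
def barActions (Δ : A → Set α) (p n : α) : Option A → Set α
  | some a => Δ a ∪ {n}
  | none => {p, n}

/-- The prohibition `P̄ = P̄₁ ∪ P̄₂ ∪ P̄₃` of the game `(Ā, Δ̄, P̄)`. -/
def barProhibition (Δ : A → Set α) (P : Set (A → α)) (p n : α) : Set (Option A → α) :=
  {δ' | δ' none = p ∧ ∃ δ ∈ P, ∀ a : A, δ' (some a) = δ a} ∪
    {δ' | ∃ a : A, δ' (some a) ∈ Δ a ∧ ∀ b : Option A, b ≠ some a → δ' b = n} ∪
    {δ' | ∀ b : Option A, δ' b = n}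

/-! Once some prohibited profile avoids the law entirely, gap-freeness says exactly that some agent
has a safe action in the law-imposed game; in `(Ā, Δ̄, P̄)` the all-`n` profile is such a profile.
The only action there that can be safe is `p` for `γ` (every other candidate `d` of an agent `a`
is hit by the `P̄₂`-profile in which `a` plays `d` and everyone else `n`), and `p` is safe for `γ`
exactly when the `P̄₁`-copies of `P` are all ruled out, i.e. when the law is useful in `(A, Δ, P)`. -/

section GapFree

variable {Δ : A → Set α} {P : Set (A → α)} {L : Set α}

theorem supp_inter_eq_empty_iff {δ : A → α} : supp δ ∩ L = ∅ ↔ ∀ a, δ a ∉ L := by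
  simp [supp, Set.eq_empty_iff_forall_notMem]

theorem gapFree_iff_exists_safeAction {δ₀ : A → α} (hδ₀ : δ₀ ∈ P) (hδ₀L : supp δ₀ ∩ L = ∅) :
    GapFree Δ P L ↔ ∃ a d, SafeAction (lawActions Δ L) (lawProhib Δ P L) a d := by
  constructor
  · intro h
    obtain ⟨a, ha | ⟨-, hsafe⟩⟩ := h δ₀ hδ₀
    · exact absurd ha (supp_inter_eq_empty_iff.1 hδ₀L a)
    · exact ⟨a, hsafe⟩
  · rintro ⟨a, hsafe⟩ δ -
    by_cases hδL : ∀ b, δ b ∉ L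
    · exact ⟨a, Or.inr ⟨supp_inter_eq_empty_iff.2 hδL, hsafe⟩⟩
    · obtain ⟨b, hb⟩ := not_forall_not.1 hδL
      exact ⟨b, Or.inl hb⟩

end GapFree

section Bar

variable {Δ : A → Set α} {P : Set (A → α)} {p n : α} {L : Set α}

theorem n_mem_barActions (b : Option A) : n ∈ barActions Δ p n b := by
  cases b <;> simp [barActions]

theorem const_mem_lawProhib_bar (hnL : n ∉ L) :
    (fun _ => n) ∈ lawProhib (barActions Δ p n) (barProhibition Δ P p n) L :=
  ⟨Or.inr fun _ => rfl, fun b => ⟨n_mem_barActions b, hnL⟩⟩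

theorem eq_none_and_eq_of_safeAction_bar (hnL : n ∉ L) {b : Option A} {d : α}
    (h : SafeAction (lawActions (barActions Δ p n) L)
      (lawProhib (barActions Δ p n) (barProhibition Δ P p n) L) b d) :
    b = none ∧ d = p := by
  classical
  obtain ⟨⟨hdb, hdL⟩, hsafe⟩ := h
  have hdn : d ≠ n := fun hd => hsafe _ (const_mem_lawProhib_bar hnL) hd.symm
  cases b with
  | none => simpa [barActions, hdn] using hdb
  | some a =>
    have hda : d ∈ Δ a := by simpa [barActions, hdn] using hdb
    set δ := Function.update (fun _ => n) (some a) d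
    have hδ_ne (c : Option A) (hc : c ≠ some a) : δ c = n := Function.update_of_ne hc _ _
    have hδ : δ ∈ lawProhib (barActions Δ p n) (barProhibition Δ P p n) L := by
      refine ⟨Or.inl (Or.inr ⟨a, by simpa [δ] using hda, hδ_ne⟩), fun c => ?_⟩
      by_cases hc : c = some a
      · subst hc
        simpa [δ, barActions] using ⟨Or.inl hda, hdL⟩
      · rw [hδ_ne c hc]
        exact ⟨n_mem_barActions c, hnL⟩
    exact (hsafe δ hδ (Function.update_self _ _ _)).elim

theorem safeAction_bar_none_iff_useful (hP : P ⊆ Profiles Δ) (hpn : p ≠ n) (hpL : p ∉ L) :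
    SafeAction (lawActions (barActions Δ p n) L)
      (lawProhib (barActions Δ p n) (barProhibition Δ P p n) L) none p ↔ Useful Δ P L := by
  constructor
  · rintro ⟨-, hsafe⟩
    refine Set.eq_empty_iff_forall_notMem.2 fun δ ⟨hδP, hδL⟩ => ?_
    refine hsafe (fun o => o.elim p δ) ⟨Or.inl (Or.inl ⟨rfl, δ, hδP, fun _ => rfl⟩), ?_⟩ rfl
    rintro (_ | a)
    · exact ⟨Or.inl rfl, hpL⟩
    · exact ⟨Or.inl (hδL a).1, (hδL a).2⟩
  · intro huseful
    refine ⟨⟨Or.inl rfl, hpL⟩, fun δ' ⟨hδ'P, hδ'L⟩ hδ'p => ?_⟩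
    rcases hδ'P with (⟨-, δ, hδP, hδ'δ⟩ | ⟨a, -, hδ'n⟩) | hδ'n
    · have hδ : δ ∈ lawProhib Δ P L := ⟨hδP, fun a => ⟨hP hδP a, hδ'δ a ▸ (hδ'L (some a)).2⟩⟩
      exact Set.eq_empty_iff_forall_notMem.1 huseful δ hδ
    · exact hpn (hδ'p ▸ hδ'n none nofun)
    · exact hpn (hδ'p ▸ hδ'n none)

theorem gapFree_bar_iff_useful (hP : P ⊆ Profiles Δ) (hpn : p ≠ n) (hpL : p ∉ L) (hnL : n ∉ L) :
    GapFree (barActions Δ p n) (barProhibition Δ P p n) L ↔ Useful Δ P L := by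
  rw [gapFree_iff_exists_safeAction (δ₀ := fun _ => n) (Or.inr fun _ => rfl)
    (supp_inter_eq_empty_iff.2 fun _ => hnL), ← safeAction_bar_none_iff_useful hP hpn hpL]
  constructor
  · rintro ⟨b, d, h⟩
    obtain ⟨rfl, rfl⟩ := eq_none_and_eq_of_safeAction_bar hnL h
    exact h
  · exact fun h => ⟨none, p, h⟩

end Bar

theorem usefulReduction_iff_bar_gapFreeReduction_general {A α : Type*}
    (Δ : A → Set α) (P : Set (A → α))
    (hP : P ⊆ Profiles Δ)
    (p n : α) (hpn : p ≠ n) (hp : p ∉ ⋃ a, Δ a) (hn : n ∉ ⋃ a, Δ a)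
    (L : Set α) (hL : L ⊆ ⋃ a, Δ a)
    (L' : Set α) :
    (L' ⊆ L ∧ Useful Δ P L') ↔
      (L' ⊆ L ∧ GapFree (barActions Δ p n) (barProhibition Δ P p n) L') :=
  and_congr_right fun hL' =>
    (gapFree_bar_iff_useful hP hpn (fun h => hp (hL (hL' h))) fun h => hn (hL (hL' h))).symm

/-- Let `(A, Δ, P)` be a game, `γ ∉ A` a fresh agent (modelled as
`none : Option A`), and `p, n` two distinct fresh actions not in `⋃Δ`. For a
useful law `L` in the game `(A, Δ, P)`, a set `L'` is a useful reduction of `L`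
in `(A, Δ, P)` (i.e. a useful law `L' ⊆ L`) if and only if `L'` is a gap-free
reduction of `L` in the game `(Ā, Δ̄, P̄)` (i.e. a gap-free law `L' ⊆ L`). -/
theorem usefulReduction_iff_bar_gapFreeReduction {A α : Type*} [Fintype A] [Nonempty A]
    (Δ : A → Set α) (P : Set (A → α))
    (hΔfin : ∀ a, (Δ a).Finite) (hP : P ⊆ Profiles Δ)
    (p n : α) (hpn : p ≠ n) (hp : p ∉ ⋃ a, Δ a) (hn : n ∉ ⋃ a, Δ a)
    (L : Set α) (hL : L ⊆ ⋃ a, Δ a) (hLuseful : Useful Δ P L)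
    (L' : Set α) :
    (L' ⊆ L ∧ Useful Δ P L') ↔
      (L' ⊆ L ∧ GapFree (barActions Δ p n) (barProhibition Δ P p n) L') :=
  usefulReduction_iff_bar_gapFreeReduction_general Δ P hP p n hpn hp hn L hL L'

end MAS
end

section
/- For a law L in a game (A, Δ, P) and an agent a ∈ A, an action d ∈ ⋃Δ is a safe action of agent a in the law-imposed game (A, Δ^L, P^L) if and only if d ∈ Δ_a^L, d is safable in the game (A, Δ, P), and L is a vertex cover of the hypergraph H^{a,d} = ((⋃Δ) \ {d}, {S(δ) \ {d} : δ ∈ P, δ_a = d}). -/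
/-!
A prohibited profile survives the law `L` exactly when its support avoids `L`. Hence `d` is safe
for `a` in the law-imposed game iff `d` is still available and `L` meets the support of every
prohibited profile in which `a` plays `d`; as `d ∉ L`, removing `d` from those supports changes
nothing, which is the vertex-cover condition. Safability is then witnessed by `L` itself.
-/

namespace MAS

variable {A α : Type*}

section LawImposedGame

variable {Δ : A → Set α} {P : Set (A → α)} {L : Set α} {a : A} {d : α}

theorem mem_lawProhib_iff (hP : P ⊆ Profiles Δ) {δ : A → α} :
    δ ∈ lawProhib Δ P L ↔ δ ∈ P ∧ ¬ (L ∩ supp δ).Nonempty := by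
  refine and_congr_right fun hδ => ⟨?_, fun h b => ⟨hP hδ b, fun hb => h ⟨δ b, hb, b, rfl⟩⟩⟩
  rintro hδL ⟨x, hxL, b, rfl⟩
  exact (hδL b).2 hxL

theorem safeAction_lawImposed_iff (hP : P ⊆ Profiles Δ) :
    SafeAction (lawActions Δ L) (lawProhib Δ P L) a d ↔
      d ∈ lawActions Δ L a ∧ ∀ δ ∈ P, δ a = d → (L ∩ supp δ).Nonempty := by
  refine and_congr_right fun _ => ⟨fun h δ hδ hδa => ?_, fun h δ hδ hδa => ?_⟩
  · by_contra hL
    exact h δ ((mem_lawProhib_iff hP).2 ⟨hδ, hL⟩) hδa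
  · obtain ⟨hδP, hδL⟩ := (mem_lawProhib_iff hP).1 hδ
    exact hδL (h δ hδP hδa)

theorem subset_Hvertices (hL : IsLaw Δ L) (hd : d ∉ L) : L ⊆ Hvertices Δ d :=
  fun _ hx => ⟨hL hx, fun hxd => hd (hxd ▸ hx)⟩

theorem isVC_Hedges_iff (hL : IsLaw Δ L) (hd : d ∉ L) :
    IsVC (Hvertices Δ d) (Hedges P a d) L ↔ ∀ δ ∈ P, δ a = d → (L ∩ supp δ).Nonempty := by
  have cover_diff (s : Set α) : L ∩ (s \ {d}) = L ∩ s := by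
    rw [← Set.inter_sdiff_assoc, Set.sdiff_singleton_eq_self fun h => hd h.1]
  simp only [IsVC, subset_Hvertices hL hd, true_and, Hedges, Set.forall_mem_image,
    Set.mem_ofPred_eq, and_imp, cover_diff]

end LawImposedGame

theorem safeAction_iff_safable_and_isVC_general {A α : Type*}
    (Δ : A → Set α) (P : Set (A → α))
    (hP : P ⊆ Profiles Δ)
    (L : Set α) (hL : IsLaw Δ L) (a : A) (d : α) :
    SafeAction (lawActions Δ L) (lawProhib Δ P L) a d ↔
      (d ∈ lawActions Δ L a ∧ Safable Δ P d ∧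
        IsVC (Hvertices Δ d) (Hedges P a d) L) := by
  constructor
  · intro hsafe
    have hdL : d ∉ L := hsafe.1.2
    refine ⟨hsafe.1, ⟨L, hL, a, hsafe⟩, ?_⟩
    exact (isVC_Hedges_iff hL hdL).2 ((safeAction_lawImposed_iff hP).1 hsafe).2
  · rintro ⟨hdΔ, -, hcover⟩
    exact (safeAction_lawImposed_iff hP).2 ⟨hdΔ, (isVC_Hedges_iff hL hdΔ.2).1 hcover⟩

/-- For a law `L` in a game `(A, Δ, P)` and an agent `a ∈ A`, an
action `d ∈ ⋃Δ` is a safe action of agent `a` in the law-imposed game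
`(A, Δ^L, P^L)` if and only if `d ∈ Δ_a^L`, `d` is safable in `(A, Δ, P)`, and
`L` is a vertex cover of the hypergraph
`H^{a,d} = ((⋃Δ) \ {d}, {S(δ) \ {d} : δ ∈ P, δ a = d})`. -/
theorem safeAction_iff_safable_and_isVC {A α : Type*} [Fintype A] [Nonempty A]
    (Δ : A → Set α) (P : Set (A → α))
    (hΔfin : ∀ a, (Δ a).Finite) (hP : P ⊆ Profiles Δ)
    (L : Set α) (hL : IsLaw Δ L) (a : A) (d : α) (hd : d ∈ ⋃ b, Δ b) :
    SafeAction (lawActions Δ L) (lawProhib Δ P L) a d ↔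
      (d ∈ lawActions Δ L a ∧ Safable Δ P d ∧
        IsVC (Hvertices Δ d) (Hedges P a d) L) :=
  safeAction_iff_safable_and_isVC_general Δ P hP L hL a d

end MAS
end
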